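/- arXiv:1106.4721 — 5 statements merged into one kernel-verified Lean document; each statement's English description precedes it below -/
import Mathlib

section
/- Let M and H be measurable groups and let φ : H → Aut(M) be an action of H on M by group automorphisms such that (h, y) ↦ φ_h(y) is measurable. Let G = M ⋊ H be the semidirect product, i.e. the set M × H with multiplication (x,h)·(y,k) = (x · φ_h(y), h·k). Let μ_M and μ_H be σ-finite measures on M and H that are invariant under all right translations of M and H respectively. Then the product measure μ_M ⊗ μ_H on G is invariant under all right translations of G: for every (y,k) ∈ G, the pushforward of μ_M ⊗ μ_H under the map (x,h) ↦ (x,h)·(y,k) = (x · φ_h(y), h·k) equals μ_M ⊗ μ_H. -/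
open MeasureTheory

/- A right translation `(x, h) ↦ (x * φ h y, h * k)` of `M ⋊ H` is a skew product over the right
translation by `k` on `H`, whose fibre maps `x ↦ x * φ h y` are right translations of `M`; each of
them preserves `μM`, so by Fubini the product measure is preserved. -/

namespace MeasureTheory.MeasurePreserving

variable {α β γ δ : Type*} [MeasurableSpace α] [MeasurableSpace β] [MeasurableSpace γ]
  [MeasurableSpace δ] {μa : Measure α} {μb : Measure β} {μc : Measure γ} {μd : Measure δ}

theorem skew_product_swap [SFinite μa] [SFinite μb] [SFinite μc] [SFinite μd] {f : α → β}
    (hf : MeasurePreserving f μa μb) {g : α → γ → δ} (hgm : Measurable (Function.uncurry g))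
    (hg : ∀ᵐ a ∂μa, Measure.map (g a) μc = μd) :
    MeasurePreserving (fun p : γ × α => (g p.2 p.1, f p.2)) (μc.prod μa) (μd.prod μb) :=
  (Measure.measurePreserving_swap.comp (hf.skew_product hgm hg)).comp
    Measure.measurePreserving_swap

end MeasureTheory.MeasurePreserving

theorem semidirect_product_right_invariant_general
    {M H : Type*} [Group M] [Group H]
    [MeasurableSpace M] [MeasurableSpace H]
    [MeasurableMul₂ M]
    [MeasurableMul₂ H]
    (φ : H →* MulAut M)
    (hφ : Measurable fun p : H × M => φ p.1 p.2)
    (μM : Measure M) (μH : Measure H)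
    [SigmaFinite μM] [SigmaFinite μH]
    (hM : ∀ g : M, Measure.map (fun x => x * g) μM = μM)
    (hH : ∀ g : H, Measure.map (fun x => x * g) μH = μH) :
    ∀ y : M, ∀ k : H,
      Measure.map (fun p : M × H => (p.1 * φ p.2 y, p.2 * k)) (μM.prod μH)
        = μM.prod μH := by
  intro y k
  have hk : MeasurePreserving (· * k) μH μH := ⟨measurable_mul_const k, hH k⟩
  have hfibre : Measurable fun p : H × M => p.2 * φ p.1 y :=
    measurable_snd.mul (hφ.comp (measurable_fst.prodMk measurable_const))
  exact (hk.skew_product_swap hfibre (ae_of_all _ fun h => hM (φ h y))).map_eq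

/-- The product of right-invariant σ-finite measures on measurable groups `M` and `H`
is right-invariant on the semidirect product `M ⋊ H`, whose multiplication is
`(x,h)·(y,k) = (x · φ h y, h·k)` for an action `φ : H →* MulAut M`. -/
theorem semidirect_product_right_invariant
    {M H : Type*} [Group M] [Group H]
    [MeasurableSpace M] [MeasurableSpace H]
    [MeasurableMul₂ M] [MeasurableInv M]
    [MeasurableMul₂ H] [MeasurableInv H]
    (φ : H →* MulAut M)
    (hφ : Measurable fun p : H × M => φ p.1 p.2)
    (μM : Measure M) (μH : Measure H)
    [SigmaFinite μM] [SigmaFinite μH]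
    (hM : ∀ g : M, Measure.map (fun x => x * g) μM = μM)
    (hH : ∀ g : H, Measure.map (fun x => x * g) μH = μH) :
    ∀ y : M, ∀ k : H,
      Measure.map (fun p : M × H => (p.1 * φ p.2 y, p.2 * k)) (μM.prod μH)
        = μM.prod μH :=
  semidirect_product_right_invariant_general φ hφ μM μH hM hH
end

section
/- Let (Ω, F, P) be a probability space equipped with a filtration (F_t)_{t≥0}, and let (τ_j)_{j≥0} be a nondecreasing sequence of stopping times with τ_0 = 0. Fix t₀ > 0 and u > 0. Suppose that for each j ≥ 0, A_j is an event belonging to the σ-algebra F_{τ_j}, that A_j ⊆ {τ_j < t₀}, and that P(τ_{j+1} − τ_j ≥ u | F_{τ_j}) ≥ 1/2 almost everywhere on A_j. Then ∑_{j≥0} P(A_j) ≤ 2(1 + t₀/u). -/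
/-!
Call `j` a long step at `ω` if `ω ∈ A_j` and `τ_{j+1}(ω) - τ_j(ω) ≥ u`. Integrating the
conditional bound over `A_j` gives `P(A_j) ≤ 2 P(A_j ∩ {τ_{j+1} - τ_j ≥ u})`. Pathwise, the long
steps start before `t₀` and each one advances `τ` by at least `u`, so there are fewer than
`1 + t₀/u` of them; integrating this count bounds `∑_j P(A_j ∩ {τ_{j+1} - τ_j ≥ u})`.
-/

open MeasureTheory Finset
open scoped ENNReal

section Counting

variable {x : ℕ → ℝ} {u : ℝ} {P : ℕ → Prop} [DecidablePred P]

theorem mul_card_filter_range_le_sub (hx : ∀ j, x j ≤ x (j + 1))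
    (hP : ∀ j, P j → u ≤ x (j + 1) - x j) (n : ℕ) :
    u * #{j ∈ range n | P j} ≤ x n - x 0 := by
  induction n with
  | zero => simp
  | succ n ih =>
    rw [range_add_one, filter_insert]
    split_ifs with hn
    · rw [card_insert_of_notMem (by simp)]
      push_cast
      linarith [hP n hn]
    · linarith [hx n]

theorem card_filter_range_lt_of_gap {t : ℝ} (hu : 0 < u) (ht : 0 ≤ t)
    (hx : ∀ j, x j ≤ x (j + 1)) (hP : ∀ j, P j → x j - x 0 < t ∧ u ≤ x (j + 1) - x j)
    (n : ℕ) : (#{j ∈ range n | P j} : ℝ) < 1 + t / u := by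
  suffices u * #{j ∈ range n | P j} < t + u by
    rw [← sub_lt_iff_lt_add', lt_div_iff₀ hu]
    linarith
  induction n with
  | zero => simpa using add_pos_of_nonneg_of_pos ht hu
  | succ n ih =>
    rw [range_add_one, filter_insert]
    split_ifs with hn
    · rw [card_insert_of_notMem (by simp)]
      push_cast
      linarith [(hP n hn).1,
        mul_card_filter_range_le_sub hx (fun j hj => (hP j hj).2) n]
    · exact ih

end Counting

section Measure

variable {Ω : Type*} {m0 : MeasurableSpace Ω} {μ : Measure Ω}

theorem tsum_measure_le_of_card_filter_le {B : ℕ → Set Ω} [∀ ω, DecidablePred (ω ∈ B ·)]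
    (hB : ∀ j, MeasurableSet (B j))
    {C : ℝ≥0∞} (hC : ∀ ω n, (#{j ∈ range n | ω ∈ B j} : ℝ≥0∞) ≤ C) :
    ∑' j, μ (B j) ≤ C * μ Set.univ := calc
  ∑' j, μ (B j) = ∫⁻ ω, ∑' j, (B j).indicator 1 ω ∂μ := by
    rw [lintegral_tsum fun j => (measurable_one.indicator (hB j)).aemeasurable]
    simp only [lintegral_indicator_one (hB _)]
  _ ≤ ∫⁻ _, C ∂μ := lintegral_mono fun ω => by
    rw [ENNReal.tsum_eq_iSup_nat]
    refine iSup_le fun n => ?_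
    simpa [Set.indicator_apply, sum_boole] using hC ω n
  _ = C * μ Set.univ := lintegral_const C

theorem mul_measureReal_le_measureReal_inter_of_le_condExp [IsFiniteMeasure μ]
    {m : MeasurableSpace Ω} (hm : m ≤ m0) {A G : Set Ω} {c : ℝ}
    (hA : MeasurableSet[m] A) (hG : MeasurableSet[m0] G)
    (hc : ∀ᵐ ω ∂μ, ω ∈ A → c ≤ μ[G.indicator (fun _ => (1 : ℝ)) | m] ω) :
    c * μ.real A ≤ μ.real (A ∩ G) := calc
  c * μ.real A = ∫ _ in A, c ∂μ := by simp [mul_comm]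
  _ ≤ ∫ ω in A, μ[G.indicator (fun _ => (1 : ℝ)) | m] ω ∂μ :=
    setIntegral_mono_ae_restrict (integrable_const c).integrableOn
      integrable_condExp.integrableOn ((ae_restrict_iff' (hm A hA)).2 hc)
  _ = ∫ ω in A, G.indicator (fun _ => (1 : ℝ)) ω ∂μ :=
    setIntegral_condExp hm ((integrable_const 1).indicator hG) hA
  _ = μ.real (A ∩ G) := by simp [setIntegral_indicator hG, Set.inter_comm]

end Measure

theorem sum_prob_le_of_cond_gap_general {Ω : Type*} {m0 : MeasurableSpace Ω}
    (μ : Measure Ω) [IsProbabilityMeasure μ]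
    (ℱ : Filtration ℝ m0) (τ : ℕ → Ω → ℝ)
    (hτ : ∀ j, IsStoppingTime ℱ (fun ω => (τ j ω : WithTop ℝ)))
    (hτ_mono : ∀ j ω, τ j ω ≤ τ (j + 1) ω)
    (hτ0 : ∀ ω, τ 0 ω = 0)
    (t₀ u : ℝ) (ht₀ : 0 < t₀) (hu : 0 < u)
    (A : ℕ → Set Ω)
    (hA_meas : ∀ j, MeasurableSet[(hτ j).measurableSpace] (A j))
    (hA_sub : ∀ j, A j ⊆ {ω | τ j ω < t₀})
    (hcond : ∀ j, ∀ᵐ ω ∂μ, ω ∈ A j →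
        (1 / 2 : ℝ) ≤ (μ[Set.indicator {ω' | u ≤ τ (j + 1) ω' - τ j ω'}
            (fun _ => (1 : ℝ)) | (hτ j).measurableSpace]) ω) :
    (∑' j, μ (A j)) ≤ ENNReal.ofReal (2 * (1 + t₀ / u)) := by
  classical
  have hτ_meas j : Measurable (τ j) :=
    ((hτ j).measurable.mono (hτ j).measurableSpace_le le_rfl).untopD 0
  have hG_meas j : MeasurableSet {ω | u ≤ τ (j + 1) ω - τ j ω} :=
    measurableSet_le measurable_const ((hτ_meas (j + 1)).sub (hτ_meas j))
  set B : ℕ → Set Ω := fun j => A j ∩ {ω | u ≤ τ (j + 1) ω - τ j ω}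
  have hB_meas j : MeasurableSet (B j) :=
    ((hτ j).measurableSpace_le _ (hA_meas j)).inter (hG_meas j)
  have hAB j : μ (A j) ≤ 2 * μ (B j) := by
    have := mul_measureReal_le_measureReal_inter_of_le_condExp (hτ j).measurableSpace_le
      (hA_meas j) (hG_meas j) (hcond j)
    rw [← ofReal_measureReal, ← ofReal_measureReal, ← ENNReal.ofReal_ofNat 2,
      ← ENNReal.ofReal_mul zero_le_two]
    exact ENNReal.ofReal_le_ofReal (by linarith)
  have hcount ω n :
      (#{j ∈ range n | ω ∈ B j} : ℝ≥0∞) ≤ ENNReal.ofReal (1 + t₀ / u) := by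
    rw [← ENNReal.ofReal_natCast]
    refine ENNReal.ofReal_le_ofReal (card_filter_range_lt_of_gap hu ht₀.le
      (fun j => hτ_mono j ω) (fun j hj => ⟨?_, hj.2⟩) n).le
    simpa [hτ0] using hA_sub j hj.1
  calc ∑' j, μ (A j) ≤ ∑' j, 2 * μ (B j) := ENNReal.tsum_le_tsum hAB
    _ = 2 * ∑' j, μ (B j) := ENNReal.tsum_mul_left
    _ ≤ 2 * ENNReal.ofReal (1 + t₀ / u) := by
      gcongr
      simpa using tsum_measure_le_of_card_filter_le (μ := μ) hB_meas hcount
    _ = ENNReal.ofReal (2 * (1 + t₀ / u)) := by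
      rw [ENNReal.ofReal_mul zero_le_two, ENNReal.ofReal_ofNat]

/-- If `(τ_j)` is a nondecreasing sequence of stopping times with `τ_0 = 0`, and `A_j` are
events in `F_{τ_j}` with `A_j ⊆ {τ_j < t₀}` such that
`P(τ_{j+1} − τ_j ≥ u | F_{τ_j}) ≥ 1/2` a.e. on `A_j`, then `∑_j P(A_j) ≤ 2(1 + t₀/u)`. -/
theorem sum_prob_le_of_cond_gap {Ω : Type*} {m0 : MeasurableSpace Ω}
    (μ : Measure Ω) [IsProbabilityMeasure μ]
    (ℱ : Filtration ℝ m0) (τ : ℕ → Ω → ℝ)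
    (hτ : ∀ j, IsStoppingTime ℱ (fun ω => (τ j ω : WithTop ℝ)))
    (hτ_nonneg : ∀ j ω, 0 ≤ τ j ω)
    (hτ_mono : ∀ j ω, τ j ω ≤ τ (j + 1) ω)
    (hτ0 : ∀ ω, τ 0 ω = 0)
    (t₀ u : ℝ) (ht₀ : 0 < t₀) (hu : 0 < u)
    (A : ℕ → Set Ω)
    (hA_meas : ∀ j, MeasurableSet[(hτ j).measurableSpace] (A j))
    (hA_sub : ∀ j, A j ⊆ {ω | τ j ω < t₀})
    (hcond : ∀ j, ∀ᵐ ω ∂μ, ω ∈ A j →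
        (1 / 2 : ℝ) ≤ (μ[Set.indicator {ω' | u ≤ τ (j + 1) ω' - τ j ω'}
            (fun _ => (1 : ℝ)) | (hτ j).measurableSpace]) ω) :
    (∑' j, μ (A j)) ≤ ENNReal.ofReal (2 * (1 + t₀ / u)) :=
  sum_prob_le_of_cond_gap_general μ ℱ τ hτ hτ_mono hτ0 t₀ u ht₀ hu A hA_meas hA_sub hcond
end

section
/- Let (Ω, F, P) be a probability space equipped with a filtration (F_t)_{t≥0}. Let (τ_k)_{k≥1} and (τ_k′)_{k≥1} be stopping times with τ_k ≤ τ_k′ ≤ τ_{k+1} for every k ≥ 1. Fix t > 0 and let E be an event such that {τ_k ≤ t < τ_k′} ⊆ E for every k ≥ 1. Assume that for each k ≥ 1, P(τ_k′ > t | F_{τ_k}) ≥ 1/2 almost everywhere on the event {τ_k ≤ t}. Then ∑_{k≥1} P(τ_k ≤ t) ≤ 2 P(E). -/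
open MeasureTheory

/-!
Since `{τ_k ≤ t}` is `F_{τ_k}`-measurable, integrating the conditional-probability bound over it
gives `P(τ_k ≤ t) ≤ 2 P(τ_k ≤ t < τ_k′)`. The events `{τ_k ≤ t < τ_k′}` are pairwise disjoint
because `τ_k′ ≤ τ_{k+1} ≤ τ_j` for `k < j`, and they all lie in `E`, so summing over `k` gives
the claim.
-/

namespace MeasureTheory.IsStoppingTime

variable {Ω ι : Type*} {m0 : MeasurableSpace Ω} [LinearOrder ι] {ℱ : Filtration ι m0}
  {τ : Ω → ι}

theorem measurableSet_setOf_coe_le (hτ : IsStoppingTime ℱ (fun ω => (τ ω : WithTop ι))) (i : ι) :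
    MeasurableSet[hτ.measurableSpace] {ω | τ ω ≤ i} := by
  simpa using hτ.measurableSet_le' i

theorem measurableSet_setOf_lt_coe (hτ : IsStoppingTime ℱ (fun ω => (τ ω : WithTop ι))) (i : ι) :
    MeasurableSet {ω | i < τ ω} :=
  hτ.measurableSpace_le _ (by simpa using hτ.measurableSet_gt' i)

end MeasureTheory.IsStoppingTime

section

variable {Ω : Type*} {m m0 : MeasurableSpace Ω} {μ : Measure Ω} [IsFiniteMeasure μ]

theorem mul_measureReal_le_measureReal_inter_of_le_condExp_indicator (hm : m ≤ m0) {S T : Set Ω}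
    (hS : MeasurableSet[m] S) (hT : MeasurableSet T) {c : ℝ}
    (hc : ∀ᵐ ω ∂μ, ω ∈ S → c ≤ μ[T.indicator (fun _ => (1 : ℝ)) | m] ω) :
    c * μ.real S ≤ μ.real (S ∩ T) :=
  calc c * μ.real S = ∫ _ in S, c ∂μ := by rw [setIntegral_const, smul_eq_mul, mul_comm]
    _ ≤ ∫ ω in S, μ[T.indicator (fun _ => (1 : ℝ)) | m] ω ∂μ :=
      setIntegral_mono_ae_restrict (integrable_const c).restrict integrable_condExp.restrict
        ((ae_restrict_iff' (hm S hS)).mpr hc)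
    _ = ∫ ω in S, T.indicator (fun _ => (1 : ℝ)) ω ∂μ :=
      setIntegral_condExp hm ((integrable_const 1).indicator hT) hS
    _ = μ.real (S ∩ T) := by
      rw [setIntegral_indicator hT, setIntegral_const, smul_eq_mul, mul_one]

theorem measure_le_two_mul_measure_inter_of_half_le_condExp_indicator (hm : m ≤ m0) {S T : Set Ω}
    (hS : MeasurableSet[m] S) (hT : MeasurableSet T)
    (hc : ∀ᵐ ω ∂μ, ω ∈ S → (1 / 2 : ℝ) ≤ μ[T.indicator (fun _ => (1 : ℝ)) | m] ω) :
    μ S ≤ 2 * μ (S ∩ T) := by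
  have h := mul_measureReal_le_measureReal_inter_of_le_condExp_indicator hm hS hT hc
  rw [← ENNReal.toReal_le_toReal (measure_ne_top μ S) (by finiteness), ENNReal.toReal_mul,
    ENNReal.toReal_ofNat]
  simp only [measureReal_def] at h
  linarith

end

theorem pairwise_disjoint_setOf_le_and_lt_of_interlacing {Ω α : Type*} [LinearOrder α]
    {a b : ℕ → Ω → α} (hab : ∀ k ω, a k ω ≤ b k ω) (hba : ∀ k ω, b k ω ≤ a (k + 1) ω) (t : α) :
    Pairwise (Function.onFun Disjoint fun k => {ω | a k ω ≤ t ∧ t < b k ω}) := by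
  have hba_of_lt : ∀ j k, j < k → ∀ ω, b j ω ≤ a k ω := fun j k hjk ω =>
    (hba j ω).trans <| monotone_nat_of_le_succ (fun n => (hab n ω).trans (hba n ω)) hjk
  refine pairwise_disjoint_on _ |>.mpr fun j k hjk => Set.disjoint_left.mpr ?_
  rintro ω ⟨-, ht_lt⟩ ⟨hle_t, -⟩
  exact (ht_lt.trans_le (hba_of_lt j k hjk ω)).not_ge hle_t

theorem sum_prob_entrance_le_general {Ω : Type*} {m0 : MeasurableSpace Ω}
    (μ : Measure Ω) [IsProbabilityMeasure μ]
    (ℱ : Filtration ℝ m0) (τ τ' : ℕ → Ω → ℝ)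
    (hτ : ∀ k, IsStoppingTime ℱ (fun ω => (τ k ω : WithTop ℝ)))
    (hτ' : ∀ k, IsStoppingTime ℱ (fun ω => (τ' k ω : WithTop ℝ)))
    (horder : ∀ k ω, τ k ω ≤ τ' k ω)
    (hchain : ∀ k ω, τ' k ω ≤ τ (k + 1) ω)
    (t : ℝ)
    (E : Set Ω)
    (hE : ∀ k, {ω | τ k ω ≤ t ∧ t < τ' k ω} ⊆ E)
    (hcond : ∀ k, ∀ᵐ ω ∂μ, τ k ω ≤ t →
        (1 / 2 : ℝ) ≤ (μ[Set.indicator {ω' | t < τ' k ω'}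
            (fun _ => (1 : ℝ)) | (hτ k).measurableSpace]) ω) :
    (∑' k, μ {ω | τ k ω ≤ t}) ≤ 2 * μ E := by
  set A : ℕ → Set Ω := fun k => {ω | τ k ω ≤ t} ∩ {ω | t < τ' k ω}
  have hA_meas : ∀ k, MeasurableSet (A k) := fun k =>
    ((hτ k).measurableSpace_le _ ((hτ k).measurableSet_setOf_coe_le t)).inter
      ((hτ' k).measurableSet_setOf_lt_coe t)
  have hA_le : ∀ k, μ {ω | τ k ω ≤ t} ≤ 2 * μ (A k) := fun k =>
    measure_le_two_mul_measure_inter_of_half_le_condExp_indicator (hτ k).measurableSpace_le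
      ((hτ k).measurableSet_setOf_coe_le t) ((hτ' k).measurableSet_setOf_lt_coe t) (hcond k)
  calc (∑' k, μ {ω | τ k ω ≤ t}) ≤ ∑' k, 2 * μ (A k) := ENNReal.tsum_le_tsum hA_le
    _ = 2 * ∑' k, μ (A k) := ENNReal.tsum_mul_left
    _ ≤ 2 * μ (⋃ k, A k) := by
      gcongr
      exact tsum_meas_le_meas_iUnion_of_disjoint μ hA_meas
        (pairwise_disjoint_setOf_le_and_lt_of_interlacing horder hchain t)
    _ ≤ 2 * μ E := by gcongr; exact Set.iUnion_subset hE

/-- If `(τ_k)` and `(τ_k′)` are stopping times with `τ_k ≤ τ_k′ ≤ τ_{k+1}`, `E` is an event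
containing each `{τ_k ≤ t < τ_k′}`, and `P(τ_k′ > t | F_{τ_k}) ≥ 1/2` a.e. on `{τ_k ≤ t}`,
then `∑_k P(τ_k ≤ t) ≤ 2 P(E)`. -/
theorem sum_prob_entrance_le {Ω : Type*} {m0 : MeasurableSpace Ω}
    (μ : Measure Ω) [IsProbabilityMeasure μ]
    (ℱ : Filtration ℝ m0) (τ τ' : ℕ → Ω → ℝ)
    (hτ : ∀ k, IsStoppingTime ℱ (fun ω => (τ k ω : WithTop ℝ)))
    (hτ' : ∀ k, IsStoppingTime ℱ (fun ω => (τ' k ω : WithTop ℝ)))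
    (horder : ∀ k ω, τ k ω ≤ τ' k ω)
    (hchain : ∀ k ω, τ' k ω ≤ τ (k + 1) ω)
    (t : ℝ) (ht : 0 < t)
    (E : Set Ω) (hE_meas : MeasurableSet E)
    (hE : ∀ k, {ω | τ k ω ≤ t ∧ t < τ' k ω} ⊆ E)
    (hcond : ∀ k, ∀ᵐ ω ∂μ, τ k ω ≤ t →
        (1 / 2 : ℝ) ≤ (μ[Set.indicator {ω' | t < τ' k ω'}
            (fun _ => (1 : ℝ)) | (hτ k).measurableSpace]) ω) :
    (∑' k, μ {ω | τ k ω ≤ t}) ≤ 2 * μ E :=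
  sum_prob_entrance_le_general μ ℱ τ τ' hτ hτ' horder hchain t E hE hcond
end

section
/- For every real q with 0 < q ≤ 1 and every β ≥ 0: 2 ∫₀¹ (1−s) (1 + s(q−1))^{−β} ds ≥ q² (q(2−q))^{−β}, and moreover q² (q(2−q))^{−β} ≥ 2^{−β} q^{2−β}. In particular, for integers n ≥ 1 and reals α > 0, d > 0, taking q = e^{−nα} and β = d/α gives 2 ∫₀¹ (1−s)(1 + s(e^{−nα}−1))^{−d/α} ds ≥ 2^{−d/α} e^{n(d−2α)}. -/
/-! On `[1 - q, 1]` the base `1 + s (q - 1)` is at most `1 - (1 - q)² = q (2 - q)`, so for `β ≥ 0`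
the integrand dominates `(q (2 - q))^{-β} (1 - s)`, whose integral over that interval is
`(q (2 - q))^{-β} q² / 2`; the rest of the integral is nonnegative. Finally `q (2 - q) ≤ 2 q`. -/

open Set intervalIntegral

lemma one_add_mul_sub_one_pos {q s : ℝ} (hq : 0 < q) (hs : s ∈ Icc (0 : ℝ) 1) :
    0 < 1 + s * (q - 1) := by
  obtain ⟨hs₀, hs₁⟩ := hs
  rcases le_total q 1 with hq₁ | hq₁ <;> nlinarith

lemma integral_one_sub (a : ℝ) : ∫ s in a..1, (1 - s) = (1 - a) ^ 2 / 2 := by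
  rw [integral_sub intervalIntegrable_const intervalIntegrable_id, integral_id, integral_one]
  ring

lemma mul_sq_div_two_le_integral_of_tail_bound {g : ℝ → ℝ} {a c : ℝ}
    (ha₀ : 0 ≤ a) (ha₁ : a ≤ 1) (hg : IntervalIntegrable g MeasureTheory.volume 0 1)
    (hg_nonneg : ∀ s ∈ Icc 0 a, 0 ≤ g s) (hg_tail : ∀ s ∈ Icc a 1, c * (1 - s) ≤ g s) :
    c * ((1 - a) ^ 2 / 2) ≤ ∫ s in (0 : ℝ)..1, g s := by
  have hg_head : IntervalIntegrable g MeasureTheory.volume 0 a :=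
    hg.mono_set (by rw [uIcc_of_le ha₀, uIcc_of_le zero_le_one]; exact Icc_subset_Icc le_rfl ha₁)
  have hg_rest : IntervalIntegrable g MeasureTheory.volume a 1 :=
    hg.mono_set (by rw [uIcc_of_le ha₁, uIcc_of_le zero_le_one]; exact Icc_subset_Icc ha₀ le_rfl)
  have head_nonneg : 0 ≤ ∫ s in (0 : ℝ)..a, g s := integral_nonneg ha₀ hg_nonneg
  have tail_bound : ∫ s in a..1, c * (1 - s) ≤ ∫ s in a..1, g s :=
    integral_mono_on ha₁ (Continuous.intervalIntegrable (by fun_prop) _ _) hg_rest hg_tail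
  rw [integral_const_mul, integral_one_sub] at tail_bound
  rw [← integral_add_adjacent_intervals hg_head hg_rest]
  linarith

lemma sq_mul_rpow_le_two_mul_integral {q β : ℝ} (hq : 0 < q) (hq₁ : q ≤ 1) (hβ : 0 ≤ β) :
    q ^ 2 * (q * (2 - q)) ^ (-β)
      ≤ 2 * ∫ s in (0 : ℝ)..1, (1 - s) * (1 + s * (q - 1)) ^ (-β) := by
  have hcont : ContinuousOn (fun s : ℝ => (1 - s) * (1 + s * (q - 1)) ^ (-β)) (Icc 0 1) :=
    (continuousOn_const.sub continuousOn_id).mul <|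
      (by fun_prop : Continuous fun s : ℝ => 1 + s * (q - 1)).continuousOn.rpow_const
        fun s hs => Or.inl (one_add_mul_sub_one_pos hq hs).ne'
  have hint := hcont.intervalIntegrable_of_Icc (μ := MeasureTheory.volume) zero_le_one
  have hbound := mul_sq_div_two_le_integral_of_tail_bound (c := (q * (2 - q)) ^ (-β))
    (by linarith : 0 ≤ 1 - q) (by linarith) hint
    (fun s hs => mul_nonneg (by linarith [hs.2])
      (Real.rpow_nonneg (one_add_mul_sub_one_pos hq ⟨hs.1, by linarith [hs.2]⟩).le _))
    (fun s hs => by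
      rw [mul_comm]
      refine mul_le_mul_of_nonneg_left ?_ (by linarith [hs.2])
      refine Real.rpow_le_rpow_of_nonpos
        (one_add_mul_sub_one_pos hq ⟨by linarith [hs.1], hs.2⟩) ?_ (neg_nonpos.mpr hβ)
      nlinarith [hs.1])
  rw [sub_sub_cancel] at hbound
  linarith

lemma two_rpow_mul_rpow_le_sq_mul_rpow {q β : ℝ} (hq : 0 < q) (hq₁ : q ≤ 1) (hβ : 0 ≤ β) :
    (2 : ℝ) ^ (-β) * q ^ (2 - β) ≤ q ^ 2 * (q * (2 - q)) ^ (-β) :=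
  calc (2 : ℝ) ^ (-β) * q ^ (2 - β) = q ^ 2 * (2 * q) ^ (-β) := by
        rw [Real.mul_rpow zero_le_two hq.le, sub_eq_add_neg, Real.rpow_add hq, Real.rpow_two]
        ring
    _ ≤ q ^ 2 * (q * (2 - q)) ^ (-β) := by
        gcongr q ^ 2 * ?_
        exact Real.rpow_le_rpow_of_nonpos (by nlinarith) (by nlinarith) (neg_nonpos.mpr hβ)

lemma exp_neg_mul_rpow_two_sub_div {x α : ℝ} (hα : α ≠ 0) (d : ℝ) :
    Real.exp (-(x * α)) ^ (2 - d / α) = Real.exp (x * (d - 2 * α)) := by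
  rw [← Real.exp_mul]
  congr 1
  field_simp
  ring

/-- Quantitative lower bounds for the density contribution of the event `A_n` in the
counterexample on the group `ℝ^d ⋊ ℤ`: for `0 < q ≤ 1` and `β ≥ 0`,
`2∫₀¹(1−s)(1+s(q−1))^{−β} ds ≥ q²(q(2−q))^{−β} ≥ 2^{−β} q^{2−β}`; taking `q = e^{−nα}`
and `β = d/α` gives the lower bound `2^{−d/α} e^{n(d−2α)}`. -/
theorem counterexample_density_lower_bound :
    (∀ q β : ℝ, 0 < q → q ≤ 1 → 0 ≤ β →
      q ^ 2 * (q * (2 - q)) ^ (-β)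
        ≤ 2 * ∫ s in (0:ℝ)..1, (1 - s) * (1 + s * (q - 1)) ^ (-β)) ∧
    (∀ q β : ℝ, 0 < q → q ≤ 1 → 0 ≤ β →
      (2:ℝ) ^ (-β) * q ^ (2 - β) ≤ q ^ 2 * (q * (2 - q)) ^ (-β)) ∧
    (∀ (n : ℕ) (α d : ℝ), 1 ≤ n → 0 < α → 0 < d →
      (2:ℝ) ^ (-(d / α)) * Real.exp (n * (d - 2 * α))
        ≤ 2 * ∫ s in (0:ℝ)..1,
            (1 - s) * (1 + s * (Real.exp (-(n * α)) - 1)) ^ (-(d / α))) := by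
  refine ⟨fun q β => sq_mul_rpow_le_two_mul_integral, fun q β => two_rpow_mul_rpow_le_sq_mul_rpow,
    fun n α d _ hα hd => ?_⟩
  have hq : 0 < Real.exp (-(n * α)) := Real.exp_pos _
  have hq₁ : Real.exp (-(n * α)) ≤ 1 :=
    Real.exp_le_one_iff.mpr (by simp only [neg_nonpos]; positivity)
  have hβ : 0 ≤ d / α := by positivity
  rw [← exp_neg_mul_rpow_two_sub_div hα.ne' d]
  exact (two_rpow_mul_rpow_le_sq_mul_rpow hq hq₁ hβ).trans
    (sq_mul_rpow_le_two_mul_integral hq hq₁ hβ)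
end

section
/- For every α > 0 there exists a constant c > 0 (one may take c = 2·4^{−α−1}) such that for all real y with 1 < y ≤ 4/3: ∫₀¹ (y − u)^{−α−1} (1 − u)^{α/2} du ≥ c (y − 1)^{−α/2}. -/
/-!
On `[2 - y, 1]` the distance `y - u` is at most `2 (y - 1)`, so the negative power
`(y - u) ^ (-α - 1)` is at least `(2 (y - 1)) ^ (-α - 1)` there, while
`∫_{2-y}^1 (1 - u) ^ (α / 2) du = (y - 1) ^ (α / 2 + 1) / (α / 2 + 1)`.
The exponents combine to `-α / 2`, and the rest of `[0, 1]` contributes a nonnegative amount.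
-/

open Real Set MeasureTheory intervalIntegral

theorem integral_sub_rpow {a b p : ℝ} (hp : -1 < p) :
    ∫ u in a..b, (b - u) ^ p = (b - a) ^ (p + 1) / (p + 1) := by
  rw [integral_comp_sub_left (fun x : ℝ => x ^ p), sub_self, integral_rpow (Or.inl hp),
    zero_rpow (by linarith), sub_zero]

theorem intervalIntegrable_sub_rpow {a b q : ℝ} (hq : -1 < q) :
    IntervalIntegrable (fun u => (b - u) ^ q) volume a b := by
  simpa using (intervalIntegrable_rpow' hq (a := b - a) (b := 0)).comp_sub_left b

theorem intervalIntegrable_sub_rpow_mul_sub_rpow {a b y p q : ℝ} (hab : a ≤ b) (hby : b < y)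
    (hq : -1 < q) : IntervalIntegrable (fun u => (y - u) ^ p * (b - u) ^ q) volume a b := by
  refine (intervalIntegrable_sub_rpow hq).continuousOn_mul
    (ContinuousOn.rpow_const (by fun_prop) fun u hu => Or.inl ?_)
  rw [uIcc_of_le hab] at hu
  linarith [hu.2]

theorem le_integral_sub_rpow_mul_one_sub_rpow {y p q : ℝ} (hy1 : 1 < y) (hy2 : y ≤ 2)
    (hp : p ≤ 0) (hq : -1 < q) :
    2 ^ p / (q + 1) * (y - 1) ^ (p + q + 1)
      ≤ ∫ u in (0 : ℝ)..1, (y - u) ^ p * (1 - u) ^ q := by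
  have hδ : 0 < y - 1 := by linarith
  have hlower : (2 * (y - 1)) ^ p * (y - 1) ^ (q + 1) / (q + 1)
      = 2 ^ p / (q + 1) * (y - 1) ^ (p + q + 1) := by
    rw [mul_rpow zero_le_two hδ.le, add_assoc p, rpow_add hδ p]
    ring
  calc 2 ^ p / (q + 1) * (y - 1) ^ (p + q + 1)
      = ∫ u in (2 - y)..1, (2 * (y - 1)) ^ p * (1 - u) ^ q := by
        rw [intervalIntegral.integral_const_mul, integral_sub_rpow hq, ← hlower]
        ring_nf
    _ ≤ ∫ u in (2 - y)..1, (y - u) ^ p * (1 - u) ^ q := by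
        refine integral_mono_on (by linarith) ?_ ?_ fun u hu => ?_
        · exact (intervalIntegrable_sub_rpow hq).const_mul _
        · exact intervalIntegrable_sub_rpow_mul_sub_rpow (by linarith) hy1 hq
        · have hpow : (2 * (y - 1)) ^ p ≤ (y - u) ^ p :=
            rpow_le_rpow_of_nonpos (by linarith [hu.2]) (by linarith [hu.1]) hp
          exact mul_le_mul_of_nonneg_right hpow (rpow_nonneg (by linarith [hu.2]) _)
    _ ≤ ∫ u in (0 : ℝ)..1, (y - u) ^ p * (1 - u) ^ q := by
        refine integral_mono_interval (by linarith) (by linarith) le_rfl ?_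
          (intervalIntegrable_sub_rpow_mul_sub_rpow zero_le_one hy1 hq)
        refine (ae_restrict_iff' measurableSet_Ioc).2 (ae_of_all _ fun u hu => ?_)
        exact mul_nonneg (rpow_nonneg (by linarith [hu.2]) _) (rpow_nonneg (by linarith [hu.2]) _)

/-- For every `α > 0` there is `c > 0` (one may take `c = 2·4^{−α−1}`) such that for all
`1 < y ≤ 4/3`: `∫₀¹ (y−u)^{−α−1}(1−u)^{α/2} du ≥ c (y−1)^{−α/2}`. -/
theorem killed_process_exit_density_lower_bound (α : ℝ) (hα : 0 < α) :
    ∃ c : ℝ, 0 < c ∧ ∀ y : ℝ, 1 < y → y ≤ 4 / 3 →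
      c * (y - 1) ^ (-(α / 2))
        ≤ ∫ u in (0:ℝ)..1, (y - u) ^ (-α - 1) * (1 - u) ^ (α / 2) := by
  refine ⟨2 ^ (-α - 1) / (α / 2 + 1), by positivity, fun y hy1 hy2 => ?_⟩
  convert le_integral_sub_rpow_mul_one_sub_rpow hy1 (by linarith) (by linarith : -α - 1 ≤ 0)
    (by linarith : -1 < α / 2) using 3
  ring
end
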